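/- Let u be a nonzero real number, let Q be a natural number, and let g : ℕ → ℝ. Define c : ℕ → ℕ → ℝ by c(r,s) = (−2u)^(r+s−Q) · Σ_{R=0}^{Q} (R!·(Q−R)!/(r!·s!))·C(R,r)·C(Q−R,s)·g(R), where (−2u)^(r+s−Q) is the integer power of the nonzero real number −2u (with r+s−Q taken in ℤ, so negative exponents are allowed). Then for all natural numbers r and s: u·((r:ℝ)+s−Q)·c(r,s) − (1/2)·(r+1)²·c(r+1,s) − (1/2)·(s+1)²·c(r,s+1) = 0. That is, c satisfies the two-variable recurrence (3.9) with eigenvalue corresponding to E = (1+Q+h̃)√Λ a_*. -/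

import Mathlib

/-!
Write `x = -2u` and `c(r,s) = x^(r+s-Q) · S(r,s)`. Since `-x/2 = u`, the left side of the
recurrence is `u · x^(r+s-Q)` times `(r+s-Q)·S(r,s) + (r+1)²·S(r+1,s) + (s+1)²·S(r,s+1)`, which
vanishes summand by summand: the weight `k ↦ (n!/k!)·C(n,k)` satisfies
`(k+1)²·w(n,k+1) = (n-k)·w(n,k)`, so the three summands carry the factors `r+s-Q`, `R-r` and
`(Q-R)-s`.
-/

open Finset Nat

section Weights

variable {K : Type*} [Field K] [CharZero K]

theorem cast_choose_succ_mul (n k : ℕ) :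
    (n.choose (k + 1) : K) * (k + 1) = n.choose k * ((n : K) - k) := by
  rcases le_or_gt k n with hkn | hnk
  · exact_mod_cast congrArg (Nat.cast : ℕ → K) (choose_succ_right_eq n k)
  · simp [choose_eq_zero_of_lt hnk, choose_eq_zero_of_lt (hnk.trans k.lt_succ_self)]

def binomWeight (n k : ℕ) : K := (n ! : K) / k ! * n.choose k

theorem sq_succ_mul_binomWeight_succ (n k : ℕ) :
    ((k : K) + 1) ^ 2 * binomWeight n (k + 1) = ((n : K) - k) * binomWeight n k := by
  have hk : (k ! : K) ≠ 0 := cast_ne_zero.mpr (factorial_ne_zero k)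
  have hk1 : (k : K) + 1 ≠ 0 := cast_add_one_ne_zero k
  unfold binomWeight
  rw [factorial_succ]
  push_cast
  field_simp
  linear_combination (n ! : K) * cast_choose_succ_mul (K := K) n k

def binomWeightSum (Q : ℕ) (g : ℕ → K) (r s : ℕ) : K :=
  ∑ R ∈ range (Q + 1), binomWeight R r * binomWeight (Q - R) s * g R

theorem binomWeightSum_recurrence (Q : ℕ) (g : ℕ → K) (r s : ℕ) :
    ((r : K) + s - Q) * binomWeightSum Q g r s
      + ((r : K) + 1) ^ 2 * binomWeightSum Q g (r + 1) s
      + ((s : K) + 1) ^ 2 * binomWeightSum Q g r (s + 1) = 0 := by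
  simp only [binomWeightSum, mul_sum, ← sum_add_distrib]
  refine sum_eq_zero fun R hR => ?_
  have hRQ : R ≤ Q := mem_range_succ_iff.mp hR
  have hr := sq_succ_mul_binomWeight_succ (K := K) R r
  have hs := sq_succ_mul_binomWeight_succ (K := K) (Q - R) s
  rw [cast_sub hRQ] at hs
  linear_combination binomWeight (Q - R) s * g R * hr + binomWeight R r * g R * hs

end Weights

/-- Equation (3.11) solves the recurrence (3.9): the coefficients
`c(r,s) = (−2u)^{r+s−Q} ∑_{R=0}^{Q} (R!(Q−R)!/(r!s!))·C(R,r)·C(Q−R,s)·g(R)`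
satisfy `u·(r+s−Q)·c(r,s) − ½(r+1)²·c(r+1,s) − ½(s+1)²·c(r,s+1) = 0`. -/
theorem stmt_10 (u : ℝ) (hu : u ≠ 0) (Q : ℕ) (g : ℕ → ℝ) (c : ℕ → ℕ → ℝ)
    (hc : ∀ r s : ℕ, c r s =
      (-2 * u) ^ ((r : ℤ) + (s : ℤ) - (Q : ℤ)) *
        ∑ R ∈ Finset.range (Q + 1),
          ((Nat.factorial R : ℝ) * (Nat.factorial (Q - R) : ℝ))
              / ((Nat.factorial r : ℝ) * (Nat.factorial s : ℝ))
            * (Nat.choose R r : ℝ) * (Nat.choose (Q - R) s : ℝ) * g R) :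
    ∀ r s : ℕ,
      u * ((r : ℝ) + (s : ℝ) - (Q : ℝ)) * c r s
        - (1 / 2) * ((r : ℝ) + 1) ^ 2 * c (r + 1) s
        - (1 / 2) * ((s : ℝ) + 1) ^ 2 * c r (s + 1) = 0 := by
  have hc' : ∀ r s : ℕ,
      c r s = (-2 * u) ^ ((r : ℤ) + s - Q) * binomWeightSum Q g r s := by
    intro r s
    rw [hc, binomWeightSum]
    congr 1
    refine sum_congr rfl fun R _ => ?_
    unfold binomWeight
    ring
  intro r s
  have hx : -2 * u ≠ 0 := by simpa using hu
  have hshift : ∀ r' s' : ℕ, (r' : ℤ) + s' = r + s + 1 →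
      c r' s' = (-2 * u) ^ ((r : ℤ) + s - Q) * (-2 * u) * binomWeightSum Q g r' s' := by
    intro r' s' h
    rw [hc', ← zpow_add_one₀ hx, h, add_sub_right_comm]
  rw [hc' r s, hshift (r + 1) s (by push_cast; ring), hshift r (s + 1) (by push_cast; ring)]
  linear_combination u * (-2 * u) ^ ((r : ℤ) + s - Q) * binomWeightSum_recurrence Q g r s
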